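/- arXiv:1101.0799 — 2 statements merged into one kernel-verified Lean document; each statement's English description precedes it below -/
import Mathlib

section
/- Let a > b > 0 and c = √(a² − b²). Set T = a² + b² + 2a²b² + 2ab·√(1 + a² + b² + a²b²) and z₀ = (i/c)·√T. Then: (1) ((a² + b²)·z₀² + c²)² = 4a²b²·z₀²·(z₀² − c²), i.e., z₀ satisfies the algebraic equation 1 + z·S(z) = 0 for a branch of the Schwarz function S(z) = ((a²+b²)/c²)z ± (2ab/c)√(z²−c²) of the ellipse; and (2) z₀ lies strictly outside the closed ellipse, i.e., writing z₀ = x₀ + iy₀ one has x₀²/a² + y₀²/b² > 1. -/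
/-!
Since `c z₀ = i√T`, the first claim is a polynomial identity in `w = -(c z₀)²`: modulo
`c² = a² - b²` it says `w² - 2(a² + b² + 2a²b²) w + (a² - b²)² = 0`, and `T` is the larger
root of this quadratic, whose discriminant is `4a²b²(1 + a²)(1 + b²)`. For the second claim,
`z₀` lies on the positive imaginary axis at height `√T / c`, and `T > a²b² > c²b²`.
-/

open Complex

section CommRing

variable {K : Type*} [CommRing K]

theorem ellipse_node_param_quadratic_eq_zero {a b s : K}
    (hs : s ^ 2 = 1 + a ^ 2 + b ^ 2 + a ^ 2 * b ^ 2) :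
    (a ^ 2 + b ^ 2 + 2 * a ^ 2 * b ^ 2 + 2 * a * b * s) ^ 2
        - 2 * (a ^ 2 + b ^ 2 + 2 * a ^ 2 * b ^ 2)
          * (a ^ 2 + b ^ 2 + 2 * a ^ 2 * b ^ 2 + 2 * a * b * s)
        + (a ^ 2 - b ^ 2) ^ 2 = 0 := by
  linear_combination 4 * a ^ 2 * b ^ 2 * hs

theorem ellipse_node_eq_of_quadratic_eq_zero {a b c w z : K} (hc : c ^ 2 = a ^ 2 - b ^ 2)
    (hw : w ^ 2 - 2 * (a ^ 2 + b ^ 2 + 2 * a ^ 2 * b ^ 2) * w + (a ^ 2 - b ^ 2) ^ 2 = 0)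
    (hz : (c * z) ^ 2 = -w) :
    ((a ^ 2 + b ^ 2) * z ^ 2 + c ^ 2) ^ 2 = 4 * a ^ 2 * b ^ 2 * z ^ 2 * (z ^ 2 - c ^ 2) := by
  linear_combination hw - (w - (c * z) ^ 2 - 2 * (a ^ 2 + b ^ 2 + 2 * a ^ 2 * b ^ 2)) * hz
    - (a ^ 2 - b ^ 2 + c ^ 2) * (z ^ 4 - 1) * hc

end CommRing

theorem one_lt_ellipse_form_ofReal_mul_I {a b y : ℝ} (hb : 0 < b) (hy : b ^ 2 < y ^ 2) :
    1 < ((y : ℂ) * I).re ^ 2 / a ^ 2 + ((y : ℂ) * I).im ^ 2 / b ^ 2 := by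
  simpa [one_lt_div (pow_pos hb 2)] using hy

/-- The quadrature node `z₀ = (i/c)√T`, with
`T = a² + b² + 2a²b² + 2ab √(1 + a² + b² + a²b²)`, satisfies the algebraic equation
`((a²+b²) z₀² + c²)² = 4a²b² z₀² (z₀² - c²)` (i.e. `1 + z S(z) = 0` for a branch of the
Schwarz function of the ellipse), and lies strictly outside the closed ellipse. -/
theorem ellipse_quadrature_node (a b c T : ℝ) (hab : b < a) (hb : 0 < b)
    (hc : c = Real.sqrt (a ^ 2 - b ^ 2))
    (hT : T = a ^ 2 + b ^ 2 + 2 * a ^ 2 * b ^ 2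
        + 2 * a * b * Real.sqrt (1 + a ^ 2 + b ^ 2 + a ^ 2 * b ^ 2))
    (z₀ : ℂ) (hz₀ : z₀ = Complex.I / (c : ℂ) * (Real.sqrt T : ℂ)) :
    (((a ^ 2 + b ^ 2 : ℝ) : ℂ) * z₀ ^ 2 + (c : ℂ) ^ 2) ^ 2 =
        4 * (a : ℂ) ^ 2 * (b : ℂ) ^ 2 * z₀ ^ 2 * (z₀ ^ 2 - (c : ℂ) ^ 2) ∧
      1 < z₀.re ^ 2 / a ^ 2 + z₀.im ^ 2 / b ^ 2 := by
  have ha : 0 < a := hb.trans hab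
  have hc2 : c ^ 2 = a ^ 2 - b ^ 2 := by rw [hc, Real.sq_sqrt (by nlinarith)]
  have hc0 : c ≠ 0 := by rw [hc]; exact (Real.sqrt_pos.2 (by nlinarith)).ne'
  have hs := Real.sq_sqrt (by positivity : (0 : ℝ) ≤ 1 + a ^ 2 + b ^ 2 + a ^ 2 * b ^ 2)
  have hs0 := Real.sqrt_nonneg (1 + a ^ 2 + b ^ 2 + a ^ 2 * b ^ 2)
  have hT0 : 0 ≤ T := by rw [hT]; positivity
  constructor
  · have hTroot :
        T ^ 2 - 2 * (a ^ 2 + b ^ 2 + 2 * a ^ 2 * b ^ 2) * T + (a ^ 2 - b ^ 2) ^ 2 = 0 := by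
      rw [hT]; exact ellipse_node_param_quadratic_eq_zero hs
    push_cast
    refine ellipse_node_eq_of_quadratic_eq_zero (a := (a : ℂ)) (b := b) (w := T)
      (by exact_mod_cast hc2) (by exact_mod_cast hTroot) ?_
    have hcz : (c : ℂ) * z₀ = (Real.sqrt T : ℂ) * I := by
      rw [hz₀]; field_simp [Complex.ofReal_ne_zero.2 hc0]
    rw [hcz, mul_pow, I_sq, ← Complex.ofReal_pow, Real.sq_sqrt hT0, mul_neg_one]
  · have hz₀' : z₀ = ((Real.sqrt T / c : ℝ) : ℂ) * I := by rw [hz₀]; push_cast; ring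
    rw [hz₀']
    refine one_lt_ellipse_form_ofReal_mul_I hb ?_
    rw [div_pow, Real.sq_sqrt hT0, hc2, lt_div_iff₀ (by nlinarith), hT]
    nlinarith [mul_nonneg (mul_nonneg ha.le hb.le) hs0]
end

section
/- Let a > b > 0, c = √(a² − b²), and define the Joukowski map f(ζ) = (c²ζ² + (a+b)²)/(2(a+b)ζ) for ζ ∈ ℂ ∖ {0}. Then: (1) for every θ ∈ ℝ, f(e^{iθ}) = a·cos θ − i·b·sin θ, so f maps the unit circle onto the ellipse {x + iy : x²/a² + y²/b² = 1}; (2) f is injective on the punctured open unit disk {ζ : 0 < |ζ| < 1}; and (3) f({ζ : 0 < |ζ| < 1}) = {x + iy : x²/a² + y²/b² > 1}, the open exterior of the closed ellipse. -/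
/-!
Since `c² = (a - b)(a + b)`, the map is `f ζ = ((a - b) ζ + (a + b) / ζ) / 2`. Writing
`Q z = (Re z)² / a² + (Im z)² / b²`, for `ζ ≠ 0` one has
`Q (f ζ) - 1 = (1 - |ζ|²) ((a + b)² - (a - b)² |ζ|²) Q ζ / (4 |ζ|⁴)`,
so `f` sends the punctured disk outside the ellipse. Conversely the preimages of `z` are the
roots of `(a - b) ζ² - 2 z ζ + (a + b) = 0`, with product `(a + b) / (a - b)`; the one of smaller
modulus has `(a - b) |ζ|² ≤ a + b`, and the identity then forces it into the unit disk.
Injectivity comes from `f ζ - f w = (ζ - w) ((a - b) ζ w - (a + b)) / (2 ζ w)`, since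
`|(a - b) ζ w| < a + b` on the disk.
-/

open Complex

noncomputable def joukowski (a b : ℝ) (ζ : ℂ) : ℂ := ((a - b) * ζ + (a + b) / ζ) / 2

noncomputable def ellipseForm (a b : ℝ) (z : ℂ) : ℝ := z.re ^ 2 / a ^ 2 + z.im ^ 2 / b ^ 2

theorem joukowski_exp_mul_I (a b θ : ℝ) :
    joukowski a b (exp (θ * I)) = a * Real.cos θ - I * b * Real.sin θ := by
  rw [joukowski, div_eq_mul_inv ((a : ℂ) + b), ← exp_neg, ← neg_mul, exp_mul_I, exp_mul_I,
    cos_neg, sin_neg, ofReal_cos, ofReal_sin]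
  ring

theorem joukowski_re (a b : ℝ) (ζ : ℂ) :
    (joukowski a b ζ).re = ζ.re * ((a - b) + (a + b) / normSq ζ) / 2 := by
  simp [joukowski, div_re]
  ring

theorem joukowski_im (a b : ℝ) (ζ : ℂ) :
    (joukowski a b ζ).im = ζ.im * ((a - b) - (a + b) / normSq ζ) / 2 := by
  simp [joukowski, div_im]
  ring

theorem ellipseForm_joukowski_sub_one {a b : ℝ} (ha : a ≠ 0) (hb : b ≠ 0) {ζ : ℂ} (hζ : ζ ≠ 0) :
    ellipseForm a b (joukowski a b ζ) - 1 =
      (1 - ‖ζ‖ ^ 2) * ((a + b) ^ 2 - (a - b) ^ 2 * ‖ζ‖ ^ 2) * ellipseForm a b ζ /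
        (4 * ‖ζ‖ ^ 4) := by
  have hs : normSq ζ ≠ 0 := normSq_eq_zero.not.mpr hζ
  rw [ellipseForm, ellipseForm, joukowski_re, joukowski_im, show ‖ζ‖ ^ 4 = (‖ζ‖ ^ 2) ^ 2 by ring,
    Complex.sq_norm]
  field_simp
  rw [normSq_apply]
  ring

theorem ellipseForm_pos {a b : ℝ} (ha : a ≠ 0) (hb : b ≠ 0) {z : ℂ} (hz : z ≠ 0) :
    0 < ellipseForm a b z := by
  have : z.re ≠ 0 ∨ z.im ≠ 0 := by
    by_contra! h
    exact hz (Complex.ext h.1 h.2)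
  rcases this with h | h
  · exact add_pos_of_pos_of_nonneg (by positivity) (by positivity)
  · exact add_pos_of_nonneg_of_pos (by positivity) (by positivity)

theorem one_lt_ellipseForm_joukowski {a b : ℝ} (hab : 0 < a * b) {ζ : ℂ} (h0 : 0 < ‖ζ‖)
    (h1 : ‖ζ‖ < 1) : 1 < ellipseForm a b (joukowski a b ζ) := by
  have ha : a ≠ 0 := left_ne_zero_of_mul hab.ne'
  have hb : b ≠ 0 := right_ne_zero_of_mul hab.ne'
  have hζ : ζ ≠ 0 := norm_pos_iff.mp h0
  have hsq : ‖ζ‖ ^ 2 < 1 := by nlinarith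
  have hfactor : 0 < (a + b) ^ 2 - (a - b) ^ 2 * ‖ζ‖ ^ 2 := by
    nlinarith [mul_le_mul_of_nonneg_left hsq.le (sq_nonneg (a - b))]
  have hfirst : 0 < 1 - ‖ζ‖ ^ 2 := by linarith
  have hQ := ellipseForm_pos ha hb hζ
  have : 0 < ellipseForm a b (joukowski a b ζ) - 1 := by
    rw [ellipseForm_joukowski_sub_one ha hb hζ]
    positivity
  linarith

theorem joukowski_sub_joukowski (a b : ℝ) {ζ w : ℂ} (hζ : ζ ≠ 0) (hw : w ≠ 0) :
    joukowski a b ζ - joukowski a b w = (ζ - w) * ((a - b) * ζ * w - (a + b)) / (2 * ζ * w) := by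
  rw [joukowski, joukowski]
  field_simp
  ring

theorem joukowski_injOn {a b : ℝ} (hab : |a - b| < |a + b|) :
    Set.InjOn (joukowski a b) {ζ : ℂ | 0 < ‖ζ‖ ∧ ‖ζ‖ < 1} := by
  rintro ζ ⟨hζ0, hζ1⟩ w ⟨hw0, hw1⟩ heq
  have hζ := norm_pos_iff.mp hζ0
  have hw := norm_pos_iff.mp hw0
  have hprod : (ζ - w) * ((a - b) * ζ * w - (a + b)) = 0 := by
    simpa [hζ, hw, sub_eq_zero.mpr heq] using (joukowski_sub_joukowski a b hζ hw).symm
  refine sub_eq_zero.mp ((mul_eq_zero.mp hprod).resolve_right fun h ↦ ?_)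
  have hnorm : |a - b| * (‖ζ‖ * ‖w‖) = |a + b| := by
    simpa [mul_assoc, ← ofReal_sub, ← ofReal_add] using congrArg norm (sub_eq_zero.mp h)
  have : ‖ζ‖ * ‖w‖ < 1 := by nlinarith
  nlinarith [abs_nonneg (a - b)]

theorem joukowski_div {a b : ℝ} (hsub : a - b ≠ 0) (hadd : a + b ≠ 0) (ζ : ℂ) :
    joukowski a b ((a + b) / ((a - b) * ζ)) = joukowski a b ζ := by
  rcases eq_or_ne ζ 0 with rfl | hζ
  · simp
  have hsub' : (a : ℂ) - b ≠ 0 := by exact_mod_cast hsub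
  have hadd' : (a : ℂ) + b ≠ 0 := by exact_mod_cast hadd
  rw [joukowski, joukowski]
  field_simp
  ring

theorem exists_joukowski_eq {a b : ℝ} (hsub : a - b ≠ 0) (hadd : a + b ≠ 0) (z : ℂ) :
    ∃ ζ ≠ 0, joukowski a b ζ = z := by
  have hsub' : (a : ℂ) - b ≠ 0 := by exact_mod_cast hsub
  obtain ⟨w, hw⟩ := IsAlgClosed.exists_pow_nat_eq (z ^ 2 - (a - b) * (a + b)) two_pos
  have hzw : z + w ≠ 0 := by
    intro h
    have : ((a - b) * (a + b) : ℂ) = 0 := by linear_combination (z - w) * h + hw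
    exact mul_ne_zero hsub' (by exact_mod_cast hadd) this
  refine ⟨(z + w) / (a - b), div_ne_zero hzw hsub', ?_⟩
  rw [joukowski]
  field_simp
  linear_combination hw

theorem exists_joukowski_eq_and_abs_mul_sq_le {a b : ℝ} (hsub : a - b ≠ 0) (hadd : a + b ≠ 0)
    (z : ℂ) : ∃ ζ ≠ 0, joukowski a b ζ = z ∧ |a - b| * ‖ζ‖ ^ 2 ≤ |a + b| := by
  obtain ⟨ζ, hζ, rfl⟩ := exists_joukowski_eq hsub hadd z
  by_cases hsmall : |a - b| * ‖ζ‖ ^ 2 ≤ |a + b|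
  · exact ⟨ζ, hζ, rfl, hsmall⟩
  refine ⟨(a + b) / ((a - b) * ζ), ?_, joukowski_div hsub hadd ζ, ?_⟩
  · exact div_ne_zero (by exact_mod_cast hadd) (mul_ne_zero (by exact_mod_cast hsub) hζ)
  · have hn : ‖((a + b : ℂ)) / ((a - b) * ζ)‖ = |a + b| / (|a - b| * ‖ζ‖) := by
      simp [← ofReal_sub, ← ofReal_add]
    rw [hn, div_pow, mul_pow]
    have : 0 < |a - b| := abs_pos.mpr hsub
    have : 0 < ‖ζ‖ := norm_pos_iff.mpr hζ
    rw [mul_div_assoc', div_le_iff₀ (by positivity)]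
    nlinarith [mul_lt_mul_of_pos_left (not_le.mp hsmall) (mul_pos (abs_pos.mpr hadd) this)]

theorem norm_lt_one_of_one_lt_ellipseForm_joukowski {a b : ℝ} (ha : a ≠ 0) (hb : b ≠ 0) {ζ : ℂ}
    (hζ : ζ ≠ 0) (hsmall : |a - b| * ‖ζ‖ ^ 2 ≤ |a + b|)
    (hz : 1 < ellipseForm a b (joukowski a b ζ)) : ‖ζ‖ < 1 := by
  by_contra! hge
  have hpos : 0 < ellipseForm a b (joukowski a b ζ) - 1 := by linarith
  rw [ellipseForm_joukowski_sub_one ha hb hζ] at hpos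
  have hfirst : 1 - ‖ζ‖ ^ 2 ≤ 0 := by nlinarith
  have hsecond : 0 ≤ (a + b) ^ 2 - (a - b) ^ 2 * ‖ζ‖ ^ 2 := by
    have : (a - b) ^ 2 * ‖ζ‖ ^ 2 ≤ (a + b) ^ 2 :=
      calc (a - b) ^ 2 * ‖ζ‖ ^ 2 ≤ (a - b) ^ 2 * (‖ζ‖ ^ 2) ^ 2 := by
            gcongr; nlinarith
        _ = (|a - b| * ‖ζ‖ ^ 2) ^ 2 := by rw [mul_pow, sq_abs]
        _ ≤ |a + b| ^ 2 := by gcongr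
        _ = (a + b) ^ 2 := sq_abs _
    linarith
  have hnum : (1 - ‖ζ‖ ^ 2) * ((a + b) ^ 2 - (a - b) ^ 2 * ‖ζ‖ ^ 2) * ellipseForm a b ζ ≤ 0 :=
    mul_nonpos_of_nonpos_of_nonneg (mul_nonpos_of_nonpos_of_nonneg hfirst hsecond)
      (ellipseForm_pos ha hb hζ).le
  exact (div_nonpos_of_nonpos_of_nonneg hnum (by positivity)).not_gt hpos

theorem joukowski_image_punctured_disk {a b : ℝ} (hab : 0 < a * b) (hne : a ≠ b) :
    joukowski a b '' {ζ : ℂ | 0 < ‖ζ‖ ∧ ‖ζ‖ < 1} = {z : ℂ | 1 < ellipseForm a b z} := by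
  have ha : a ≠ 0 := left_ne_zero_of_mul hab.ne'
  have hb : b ≠ 0 := right_ne_zero_of_mul hab.ne'
  have hadd : a + b ≠ 0 := by
    intro h
    rw [show b = -a by linarith] at hab
    nlinarith [sq_nonneg a]
  ext z
  constructor
  · rintro ⟨ζ, ⟨h0, h1⟩, rfl⟩
    exact one_lt_ellipseForm_joukowski hab h0 h1
  · intro hz
    obtain ⟨ζ, hζ, rfl, hsmall⟩ :=
      exists_joukowski_eq_and_abs_mul_sq_le (sub_ne_zero.mpr hne) hadd z
    exact ⟨ζ, ⟨norm_pos_iff.mpr hζ,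
      norm_lt_one_of_one_lt_ellipseForm_joukowski ha hb hζ hsmall hz⟩, rfl⟩

theorem joukowski_eq_div {a b c : ℝ} (hc : c ^ 2 = a ^ 2 - b ^ 2) (hadd : a + b ≠ 0) (ζ : ℂ) :
    joukowski a b ζ = ((c : ℂ) ^ 2 * ζ ^ 2 + ((a : ℂ) + b) ^ 2) / (2 * ((a : ℂ) + b) * ζ) := by
  rcases eq_or_ne ζ 0 with rfl | hζ
  · simp [joukowski]
  have hadd' : (a : ℂ) + b ≠ 0 := by exact_mod_cast hadd
  have hc' : (c : ℂ) ^ 2 = a ^ 2 - b ^ 2 := by exact_mod_cast hc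
  rw [joukowski, hc']
  field_simp
  ring

/-- The Joukowski map `f(ζ) = (c²ζ² + (a+b)²)/(2(a+b)ζ)`: (1) it maps the unit circle onto
the ellipse, via `f(e^{iθ}) = a cos θ - i b sin θ`; (2) it is injective on the punctured open
unit disk; (3) it maps the punctured open unit disk onto the open exterior of the closed
ellipse. -/
theorem joukowski_map_ellipse (a b c : ℝ) (hab : b < a) (hb : 0 < b)
    (hc : c = Real.sqrt (a ^ 2 - b ^ 2))
    (f : ℂ → ℂ)
    (hf : ∀ ζ : ℂ, f ζ = ((c : ℂ) ^ 2 * ζ ^ 2 + ((a : ℂ) + b) ^ 2) / (2 * ((a : ℂ) + b) * ζ)) :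
    (∀ θ : ℝ, f (Complex.exp (θ * Complex.I)) =
        (a : ℂ) * Real.cos θ - Complex.I * (b : ℂ) * Real.sin θ) ∧
    Set.InjOn f {ζ : ℂ | 0 < ‖ζ‖ ∧ ‖ζ‖ < 1} ∧
    f '' {ζ : ℂ | 0 < ‖ζ‖ ∧ ‖ζ‖ < 1} =
      {z : ℂ | 1 < z.re ^ 2 / a ^ 2 + z.im ^ 2 / b ^ 2} := by
  have ha : 0 < a := hb.trans hab
  have hc2 : c ^ 2 = a ^ 2 - b ^ 2 := by
    rw [hc, Real.sq_sqrt]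
    nlinarith
  have hf' : f = joukowski a b := funext fun ζ ↦ (hf ζ).trans
    (joukowski_eq_div hc2 (by positivity) ζ).symm
  subst hf'
  refine ⟨joukowski_exp_mul_I a b, joukowski_injOn ?_, joukowski_image_punctured_disk
    (mul_pos ha hb) hab.ne'⟩
  rw [abs_of_pos (by linarith), abs_of_pos (by linarith)]
  linarith
end
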